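/- arXiv:1611.02093 — 2 statements merged into one kernel-verified Lean document; each statement's English description precedes it below -/
import Mathlib

section
/- Let G = P_3 be the path on 3 vertices with endpoints u = 1 and v = 3, and let the potential be q = (0, c, 0) for a real number c. If there exist integers k and ℓ of opposite parity (one even, one odd) such that (k² − ℓ²)·c² = 8·ℓ², then perfect state transfer occurs from u to v at the time T = 2πk/√(c² + 8). -/
open Matrix

/-- Adjacency matrix of the path on `n` vertices. -/
def pathAdj (n : ℕ) : Matrix (Fin n) (Fin n) ℝ :=
  Matrix.of fun j k => if (j : ℕ) + 1 = (k : ℕ) ∨ (k : ℕ) + 1 = (j : ℕ) then 1 else 0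

/-- Hamiltonian of the path on `n` vertices with potential `q`. -/
def pathHam (n : ℕ) (q : Fin n → ℝ) : Matrix (Fin n) (Fin n) ℝ :=
  pathAdj n + Matrix.diagonal q

/-- Perfect state transfer from `u` to `v` at time `T` for real Hamiltonian `H`. -/
noncomputable def pst {ι : Type*} [Fintype ι] [DecidableEq ι]
    (H : Matrix ι ι ℝ) (u v : ι) (T : ℝ) : Prop :=
  ‖NormedSpace.exp ((Complex.I * (T : ℂ)) • H.map (Complex.ofReal)) u v‖ = 1

/-! The Hamiltonian of `P₃` with potential `(0, c, 0)` has the eigenvector `(1, 0, -1)` for the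
eigenvalue `0` and the eigenvectors `(1, λ, 1)` for the two roots `λ = (c ± √(c² + 8)) / 2` of
`λ² = c λ + 2`. The arithmetic condition says `k c = ± ℓ √(c² + 8)`, so at time `T` both `T λ` are
odd multiples of `π`. Hence `exp (i T H)` fixes `(1, 0, -1)` and negates both `(1, λ, 1)`: it is
minus the reversal of the path, whose `(1, 3)` entry is `-1`. -/

theorem Matrix.exp_mul_eq_mul_diagonal_exp {m 𝔸 : Type*} [Fintype m] [DecidableEq m]
    [NormedCommRing 𝔸] [NormedAlgebra ℚ 𝔸] [CompleteSpace 𝔸] {M U : Matrix m m 𝔸}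
    {d : m → 𝔸} (hU : IsUnit U) (h : M * U = U * diagonal d) :
    NormedSpace.exp M * U = U * diagonal (fun i => NormedSpace.exp (d i)) := by
  have hdet : IsUnit U.det := (isUnit_iff_isUnit_det U).mp hU
  have hM : M = U * diagonal d * U⁻¹ := by
    rw [← h, mul_nonsing_inv_cancel_right U M hdet]
  rw [hM, exp_conj _ _ hU, exp_diagonal, Matrix.mul_assoc, nonsing_inv_mul _ hdet, Matrix.mul_one,
    Pi.exp_def]

theorem p3_mul_eigenvectors {c a b : ℂ} (ha : a ^ 2 = c * a + 2) (hb : b ^ 2 = c * b + 2) :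
    !![0, 1, 0; 1, c, 1; 0, 1, 0] * !![1, 1, 1; 0, a, b; -1, 1, 1] =
      !![1, 1, 1; 0, a, b; -1, 1, 1] * diagonal ![0, a, b] := by
  ext i j
  fin_cases i <;> fin_cases j <;> simp [Matrix.mul_apply, Fin.sum_univ_three] <;>
    first | linear_combination -ha | linear_combination -hb

theorem det_p3_eigenvectors (a b : ℂ) :
    (!![1, 1, 1; 0, a, b; -1, 1, 1] : Matrix (Fin 3) (Fin 3) ℂ).det = 2 * (a - b) := by
  rw [det_fin_three]
  simp
  ring

theorem exp_smul_p3_eq_neg_reversal {c a b t : ℂ} (ha : a ^ 2 = c * a + 2)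
    (hb : b ^ 2 = c * b + 2) (hab : a ≠ b) (hta : Complex.exp (t * a) = -1)
    (htb : Complex.exp (t * b) = -1) :
    NormedSpace.exp (t • !![0, 1, 0; 1, c, 1; 0, 1, 0]) = !![0, 0, -1; 0, -1, 0; -1, 0, 0] := by
  set U : Matrix (Fin 3) (Fin 3) ℂ := !![1, 1, 1; 0, a, b; -1, 1, 1]
  have hU : IsUnit U := by
    rw [isUnit_iff_isUnit_det, det_p3_eigenvectors, isUnit_iff_ne_zero]
    exact mul_ne_zero two_ne_zero (sub_ne_zero.mpr hab)
  have heig : (t • !![0, 1, 0; 1, c, 1; 0, 1, 0]) * U = U * diagonal ![0, t * a, t * b] := by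
    rw [Matrix.smul_mul, p3_mul_eigenvectors ha hb, ← Matrix.mul_smul, ← diagonal_smul]
    congr 2
    ext i
    fin_cases i <;> simp
  rw [← hU.mul_left_inj, exp_mul_eq_mul_diagonal_exp hU heig]
  ext i j
  fin_cases i <;> fin_cases j <;>
    simp [U, Matrix.mul_apply, Fin.sum_univ_three, ← Complex.exp_eq_exp_ℂ, hta, htb]

theorem Complex.exp_I_mul_eq_neg_one_of_odd {x : ℝ} {n : ℤ} (hn : Odd n)
    (hx : x = n * Real.pi) : Complex.exp (Complex.I * x) = -1 := by
  rw [hx, Complex.ofReal_mul, Complex.ofReal_intCast, mul_left_comm, mul_comm Complex.I,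
    Complex.exp_int_mul, Complex.exp_pi_mul_I, hn.neg_one_zpow]

theorem exp_I_mul_smul_p3_of_odd {c Δ T : ℝ} {m n : ℤ} (hΔ : Δ ^ 2 = c ^ 2 + 8) (hΔ0 : Δ ≠ 0)
    (hm : Odd m) (hn : Odd n) (hTm : T * ((c + Δ) / 2) = m * Real.pi)
    (hTn : T * ((c - Δ) / 2) = n * Real.pi) :
    NormedSpace.exp ((Complex.I * T) • !![0, 1, 0; 1, (c : ℂ), 1; 0, 1, 0]) =
      !![0, 0, -1; 0, -1, 0; -1, 0, 0] := by
  have hΔℂ : (Δ : ℂ) ^ 2 = c ^ 2 + 8 := by exact_mod_cast hΔ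
  have hroot : ∀ x : ℝ, x = (c + Δ) / 2 ∨ x = (c - Δ) / 2 → (x : ℂ) ^ 2 = c * x + 2 := by
    rintro x (rfl | rfl) <;> push_cast <;> linear_combination hΔℂ / 4
  refine exp_smul_p3_eq_neg_reversal (hroot _ (.inl rfl)) (hroot _ (.inr rfl)) ?_ ?_ ?_
  · rw [Ne, Complex.ofReal_inj]
    intro h
    exact hΔ0 (by linarith)
  · rw [mul_assoc, ← Complex.ofReal_mul]
    exact Complex.exp_I_mul_eq_neg_one_of_odd hm hTm
  · rw [mul_assoc, ← Complex.ofReal_mul]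
    exact Complex.exp_I_mul_eq_neg_one_of_odd hn hTn

theorem pathHam_three_map_ofReal (c : ℝ) :
    (pathHam 3 ![0, c, 0]).map Complex.ofReal = !![0, 1, 0; 1, (c : ℂ), 1; 0, 1, 0] := by
  ext i j
  fin_cases i <;> fin_cases j <;> simp [pathHam, pathAdj]

/-- On the path `P₃` with potential `(0, c, 0)`, if there are integers `k, ℓ` of
opposite parity with `(k² − ℓ²)·c² = 8·ℓ²`, then perfect state transfer between the endpoints
occurs at time `T = 2πk/√(c² + 8)`. -/
theorem pst_P3_time (c : ℝ) (k l : ℤ)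
    (hpar : (Even k ∧ Odd l) ∨ (Odd k ∧ Even l))
    (heq : ((k : ℝ) ^ 2 - (l : ℝ) ^ 2) * c ^ 2 = 8 * (l : ℝ) ^ 2) :
    pst (pathHam 3 ![0, c, 0]) 0 2 (2 * Real.pi * (k : ℝ) / Real.sqrt (c ^ 2 + 8)) := by
  set Δ := Real.sqrt (c ^ 2 + 8)
  have hΔ : Δ ^ 2 = c ^ 2 + 8 := Real.sq_sqrt (by positivity)
  have hΔ0 : Δ ≠ 0 := (Real.sqrt_pos.2 (by positivity)).ne'
  have hkl : Odd (k + l) := by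
    rcases hpar with ⟨hk, hl⟩ | ⟨hk, hl⟩
    exacts [hk.add_odd hl, hk.add_even hl]
  have hsq : ((k : ℝ) * c) ^ 2 = (l * Δ) ^ 2 := by
    rw [mul_pow, mul_pow, hΔ]
    linear_combination heq
  obtain ⟨m, hm, hkm⟩ : ∃ m : ℤ, Odd (k + m) ∧ (k : ℝ) * c = m * Δ := by
    rcases sq_eq_sq_iff_eq_or_eq_neg.mp hsq with h | h
    · exact ⟨l, hkl, h⟩
    · refine ⟨-l, ?_, by push_cast; linarith⟩
      rw [Int.odd_iff] at hkl ⊢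
      omega
  have hm' : Odd (m - k) := by
    rw [Int.odd_iff] at hm ⊢
    omega
  rw [pst, pathHam_three_map_ofReal, exp_I_mul_smul_p3_of_odd hΔ hΔ0 hm hm' ?_ ?_]
  · simp
  all_goals push_cast; field_simp; linear_combination hkm
end

section
/- Let n ≥ 2, let q = (Q_1,…,Q_n,Q_n,…,Q_1) be a symmetric potential on the path P_{2n}, and let H be the corresponding Hamiltonian. If perfect state transfer occurs between the endpoints 1 and 2n at some time T ∈ ℝ, then the difference of any two eigenvalues of H is a rational number. -/
open Matrix

/-!
Let `J` be the reversal permutation matrix. An eigenvector `x` of the tridiagonal matrix `H` is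
determined by `x 0`, and `J` commutes with `H` for a symmetric potential, so `J x = ε x` with
`ε = ±1`. Perfect state transfer forces the first row of the unitary `U = exp (i T H)` to be
`γ e_last`, and comparing first entries in `U x = exp (i T λ) x` gives `exp (i T λ) = γ ε`; hence
`T (λ - μ) ∈ π ℤ` for all eigenvalues `λ, μ`. In an orthonormal eigenbasis with signs `ε i`,
`∑ ε i = tr J = 0` and `∑ ε i λ i = tr (H J) = 2`, so `2 T = ∑ ε i T (λ i - λ 0) ∈ π ℤ`. As `T ≠ 0`,
dividing gives `λ - μ ∈ ℚ`.
-/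

open NormedSpace
open AddSubgroup (zmultiples)

namespace Matrix

variable {ι 𝕂 : Type*} [Fintype ι] [DecidableEq ι] [RCLike 𝕂]

theorem exp_mulVec_of_mulVec_eq_smul {M : Matrix ι ι 𝕂} {x : ι → 𝕂} {c : 𝕂}
    (h : M *ᵥ x = c • x) : exp M *ᵥ x = exp c • x := by
  open scoped Matrix.Norms.Operator in
  have hpow (k : ℕ) : M ^ k *ᵥ x = c ^ k • x := by
    induction k with
    | zero => simp
    | succ k ih => rw [pow_succ', ← mulVec_mulVec, ih, mulVec_smul, h, smul_smul, pow_succ]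
  have hM := (exp_series_hasSum_exp' (𝕂 := 𝕂) M).map (mulVec.addMonoidHomLeft x)
    (continuous_id.matrix_mulVec continuous_const)
  refine hM.unique ?_
  simpa [Function.comp_def, mulVec.addMonoidHomLeft, smul_mulVec, hpow, smul_smul]
    using (exp_series_hasSum_exp' (𝕂 := 𝕂) c).smul_const x

theorem apply_eq_zero_of_norm_apply_eq_one {U : Matrix ι ι 𝕂} (hU : U ∈ unitaryGroup ι 𝕂)
    {i j k : ι} (hij : ‖U i j‖ = 1) (hk : k ≠ j) : U i k = 0 := by
  have hrow : ∑ l, ‖U i l‖ ^ 2 = 1 := by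
    have h := congrFun₂ (mem_unitaryGroup_iff.mp hU) i i
    simp only [mul_apply, star_eq_conjTranspose, conjTranspose_apply, ← starRingEnd_apply,
      RCLike.mul_conj, one_apply_eq] at h
    exact_mod_cast h
  rw [← Finset.add_sum_erase _ _ (Finset.mem_univ j), hij, one_pow, add_eq_left,
    Finset.sum_eq_zero_iff_of_nonneg (fun _ _ => sq_nonneg _)] at hrow
  simpa using hrow k (by simp [hk])

end Matrix

theorem Matrix.IsHermitian.eigenvectorBasis_ne_zero {n 𝕜 : Type*} [Fintype n] [DecidableEq n]
    [RCLike 𝕜] {A : Matrix n n 𝕜} (hA : A.IsHermitian) (i : n) :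
    ⇑(hA.eigenvectorBasis i) ≠ 0 :=
  (WithLp.ofLp_eq_zero 2).ne.2 <| hA.eigenvectorBasis.orthonormal.ne_zero i

theorem Matrix.IsHermitian.trace_eq_sum_of_mulVec_eigenvectorBasis {n 𝕜 : Type*} [Fintype n]
    [DecidableEq n] [RCLike 𝕜] {A B : Matrix n n 𝕜} (hA : A.IsHermitian) {ε : n → 𝕜}
    (hB : ∀ i, B *ᵥ ⇑(hA.eigenvectorBasis i) = ε i • ⇑(hA.eigenvectorBasis i)) :
    B.trace = ∑ i, ε i := by
  set P : Matrix n n 𝕜 := (hA.eigenvectorUnitary : Matrix n n 𝕜)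
  have hBP : B * P = P * diagonal ε := by
    ext j i
    rw [mul_diagonal]
    simpa [mul_apply, P, mulVec, dotProduct, mul_comm] using congrFun (hB i) j
  calc B.trace = (star P * (B * P)).trace := by
        rw [trace_mul_comm, mul_assoc, mem_unitaryGroup_iff.mp hA.eigenvectorUnitary.2, mul_one]
    _ = ∑ i, ε i := by
        rw [hBP, ← mul_assoc, mem_unitaryGroup_iff'.mp hA.eigenvectorUnitary.2, one_mul,
          trace_diagonal]

section Evolution

variable {ι : Type*} [Fintype ι] [DecidableEq ι]

theorem Matrix.IsHermitian.exp_I_mul_smul_mem_unitaryGroup {H : Matrix ι ι ℝ}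
    (hH : H.IsHermitian) (T : ℝ) :
    NormedSpace.exp ((Complex.I * T) • H.map Complex.ofReal) ∈ unitaryGroup ι ℂ := by
  set M := (Complex.I * T) • H.map Complex.ofReal with hM
  have hskew : M ∈ skewAdjoint (Matrix ι ι ℂ) := by
    rw [hM, mul_smul]
    exact IsSelfAdjoint.I_smul_mem_skewAdjoint <| IsSelfAdjoint.smul (Complex.conj_ofReal T)
      (hH.map _ fun _ => (Complex.conj_ofReal _).symm).isSelfAdjoint
  rw [mem_unitaryGroup_iff, star_eq_conjTranspose, ← Matrix.exp_conjTranspose,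
    ← star_eq_conjTranspose, skewAdjoint.mem_iff.mp hskew,
    ← Matrix.exp_add_of_commute _ _ (Commute.refl M).neg_right, add_neg_cancel, exp_zero]

theorem pst.cexp_mul_apply {H : Matrix ι ι ℝ} (hH : H.IsHermitian) {u v : ι} {T : ℝ}
    (h : pst H u v T) {lam : ℝ} {z : ι → ℝ} (hz : H *ᵥ z = lam • z) :
    Complex.exp (Complex.I * T * lam) * z u =
      NormedSpace.exp ((Complex.I * T) • H.map Complex.ofReal) u v * z v := by
  set U := NormedSpace.exp ((Complex.I * T) • H.map Complex.ofReal)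
  have hzC :
      H.map Complex.ofReal *ᵥ (Complex.ofReal ∘ z) = (lam : ℂ) • (Complex.ofReal ∘ z) := by
    ext i
    exact (Complex.ofRealHom.map_mulVec H z i).symm.trans (by simp [hz])
  have hUz :
      U *ᵥ (Complex.ofReal ∘ z) = Complex.exp (Complex.I * T * lam) • (Complex.ofReal ∘ z) := by
    rw [Complex.exp_eq_exp_ℂ]
    exact exp_mulVec_of_mulVec_eq_smul (by rw [smul_mulVec, hzC, smul_smul])
  have hrow (k : ι) (hk : k ≠ v) : U u k = 0 :=
    apply_eq_zero_of_norm_apply_eq_one (hH.exp_I_mul_smul_mem_unitaryGroup T) h hk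
  have hu := congrFun hUz u
  rw [mulVec, dotProduct, Finset.sum_eq_single v (fun k _ hk => by rw [hrow k hk, zero_mul])
    (by simp)] at hu
  simpa [mul_comm] using hu.symm

theorem pst.time_ne_zero {H : Matrix ι ι ℝ} {u v : ι} {T : ℝ} (h : pst H u v T) (huv : u ≠ v) :
    T ≠ 0 := by
  rintro rfl
  simp [pst, one_apply_ne huv] at h

end Evolution

theorem sub_mem_zmultiples_pi_of_cexp_sq_eq {s t : ℝ}
    (h : Complex.exp (Complex.I * s) ^ 2 = Complex.exp (Complex.I * t) ^ 2) :
    s - t ∈ zmultiples Real.pi := by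
  rw [← Complex.exp_nat_mul, ← Complex.exp_nat_mul, Complex.exp_eq_exp_iff_exists_int] at h
  obtain ⟨k, hk⟩ := h
  refine ⟨k, ?_⟩
  have : ((k • Real.pi : ℝ) : ℂ) * (2 * Complex.I) = ((s - t : ℝ) : ℂ) * (2 * Complex.I) := by
    push_cast
    linear_combination -hk
  exact_mod_cast mul_right_cancel₀ (by simp) this

theorem exists_rat_eq_of_mul_mem_zmultiples_pi {T d : ℝ} (hT : T ≠ 0)
    (h2T : 2 * T ∈ zmultiples Real.pi) (hd : T * d ∈ zmultiples Real.pi) : ∃ r : ℚ, d = r := by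
  obtain ⟨N, hN⟩ := h2T
  obtain ⟨c, hc⟩ := hd
  simp only [zsmul_eq_mul] at hN hc
  have hN0 : (N : ℝ) ≠ 0 := by
    rintro h
    rw [h, zero_mul] at hN
    exact hT (by linarith)
  refine ⟨2 * c / N, ?_⟩
  push_cast
  rw [eq_div_iff hN0]
  refine mul_left_cancel₀ Real.pi_ne_zero ?_
  linear_combination d * hN - 2 * hc

section PathHamiltonian

variable {m : ℕ} {q : Fin m → ℝ} {lam : ℝ} {x y : Fin m → ℝ}

theorem pathHam_isHermitian (m : ℕ) (q : Fin m → ℝ) : (pathHam m q).IsHermitian := by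
  ext i j
  simp only [pathHam, pathAdj, conjTranspose_apply, star_trivial, Matrix.add_apply, of_apply,
    diagonal_apply, or_comm]
  rcases eq_or_ne i j with rfl | h
  · rfl
  · rw [if_neg h.symm, if_neg h]

theorem pathHam_mulVec_apply_of_forall_le {k : Fin m} (hk : (k : ℕ) + 1 < m)
    (hx : ∀ j ≤ k, x j = 0) : (pathHam m q *ᵥ x) k = x ⟨k + 1, hk⟩ := by
  rw [mulVec, dotProduct, Finset.sum_eq_single ⟨k + 1, hk⟩]
  · simp [pathHam, pathAdj, Fin.ext_iff]
  · intro j _ hj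
    rcases le_or_gt j k with hjk | hjk
    · rw [hx j hjk, mul_zero]
    · have : (k : ℕ) + 1 ≠ j := fun h => hj (Fin.ext h.symm)
      rw [Fin.lt_def] at hjk
      simp only [pathHam, pathAdj, Matrix.add_apply, of_apply, diagonal_apply, Fin.ext_iff]
      rw [if_neg (by omega), if_neg (by omega), add_zero, zero_mul]
  · simp

theorem eq_zero_of_pathHam_mulVec_eq_smul (hm : 0 < m) (hx : pathHam m q *ᵥ x = lam • x)
    (h0 : x ⟨0, hm⟩ = 0) : x = 0 := by
  suffices h : ∀ k : ℕ, ∀ j : Fin m, (j : ℕ) ≤ k → x j = 0 from funext fun j => h j j le_rfl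
  intro k
  induction k with
  | zero => exact fun j hj => by rwa [show j = ⟨0, hm⟩ from Fin.ext (Nat.le_zero.mp hj)]
  | succ k ih =>
    intro j hj
    rcases Nat.lt_or_ge k j with hkj | hkj
    · have hk : k < m := by omega
      rw [show j = ⟨k + 1, by omega⟩ from Fin.ext (Nat.le_antisymm hj hkj),
        ← pathHam_mulVec_apply_of_forall_le (k := ⟨k, hk⟩) (by simp; omega)
          fun i hi => ih i (Fin.le_def.mp hi), hx]
      simp [ih ⟨k, hk⟩ le_rfl]
    · exact ih j hkj

theorem pathHam_eigenvector_smul_eq (hm : 0 < m) (hx : pathHam m q *ᵥ x = lam • x)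
    (hy : pathHam m q *ᵥ y = lam • y) : x ⟨0, hm⟩ • y = y ⟨0, hm⟩ • x := by
  refine sub_eq_zero.mp (eq_zero_of_pathHam_mulVec_eq_smul hm (q := q) (lam := lam) ?_ ?_)
  · simp only [mulVec_sub, mulVec_smul, hx, hy, smul_sub, smul_comm lam]
  · simp [mul_comm]

theorem pathHam_submatrix_rev (hq : ∀ i, q i.rev = q i) :
    (pathHam m q).submatrix Fin.rev Fin.rev = pathHam m q := by
  ext i j
  have := i.isLt; have := j.isLt
  simp only [pathHam, pathAdj, submatrix_apply, Matrix.add_apply, of_apply, diagonal_apply,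
    Fin.rev_inj, Fin.val_rev, hq]
  congr 2
  apply propext
  omega

theorem pathHam_mulVec_comp_rev (hq : ∀ i, q i.rev = q i) (x : Fin m → ℝ) :
    pathHam m q *ᵥ (x ∘ Fin.rev) = (pathHam m q *ᵥ x) ∘ Fin.rev := by
  conv_lhs => rw [← pathHam_submatrix_rev hq]
  exact (submatrix_mulVec_equiv _ _ _ Fin.revPerm).trans (by simp [Function.comp_def])

theorem pathHam_eigenvector_comp_rev (hm : 0 < m) (hq : ∀ i, q i.rev = q i) (hx0 : x ≠ 0)
    (hx : pathHam m q *ᵥ x = lam • x) : ∃ ε : ℝ, (ε = 1 ∨ ε = -1) ∧ x ∘ Fin.rev = ε • x := by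
  have hxr : pathHam m q *ᵥ (x ∘ Fin.rev) = lam • (x ∘ Fin.rev) := by
    rw [pathHam_mulVec_comp_rev hq, hx]; rfl
  have hx0' : x ⟨0, hm⟩ ≠ 0 := fun h => hx0 (eq_zero_of_pathHam_mulVec_eq_smul hm hx h)
  set ε := (x ∘ Fin.rev) ⟨0, hm⟩ / x ⟨0, hm⟩ with hεdef
  have hrev : x ∘ Fin.rev = ε • x := by
    rw [hεdef, div_eq_inv_mul, mul_smul, ← pathHam_eigenvector_smul_eq hm hx hxr,
      inv_smul_smul₀ hx0']
  have hε : ε * ε = 1 := by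
    have hpt (i : Fin m) : x i.rev = ε * x i := congrFun hrev i
    refine smul_left_injective ℝ hx0 (funext fun i => ?_)
    simp only [Pi.smul_apply, smul_eq_mul, one_mul, mul_assoc, ← hpt, Fin.rev_rev]
  exact ⟨ε, mul_self_eq_one_iff.mp hε, hrev⟩

theorem pathHam_cexp_sq_eq_of_pst (hm : 0 < m) (hq : ∀ i, q i.rev = q i) {T : ℝ}
    (h : pst (pathHam m q) ⟨0, hm⟩ ⟨m - 1, Nat.sub_lt hm one_pos⟩ T) (hx0 : x ≠ 0)
    (hx : pathHam m q *ᵥ x = lam • x) :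
    Complex.exp (Complex.I * ↑(T * lam)) ^ 2 =
      exp ((Complex.I * T) • (pathHam m q).map Complex.ofReal) ⟨0, hm⟩
        ⟨m - 1, Nat.sub_lt hm one_pos⟩ ^ 2 := by
  obtain ⟨ε, hε, hrev⟩ := pathHam_eigenvector_comp_rev hm hq hx0 hx
  have hx0' : x ⟨0, hm⟩ ≠ 0 := fun h => hx0 (eq_zero_of_pathHam_mulVec_eq_smul hm hx h)
  have hphase := pst.cexp_mul_apply (pathHam_isHermitian m q) h hx
  rw [show x ⟨m - 1, _⟩ = ε * x ⟨0, hm⟩ from congrFun hrev ⟨0, hm⟩, Complex.ofReal_mul,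
    ← mul_assoc] at hphase
  rw [Complex.ofReal_mul, ← mul_assoc, mul_right_cancel₀ (Complex.ofReal_ne_zero.mpr hx0') hphase]
  rcases hε with rfl | rfl <;> push_cast <;> ring

theorem pathHam_mul_sub_mem_zmultiples_pi_of_pst (hm : 0 < m) (hq : ∀ i, q i.rev = q i) {T : ℝ}
    (h : pst (pathHam m q) ⟨0, hm⟩ ⟨m - 1, Nat.sub_lt hm one_pos⟩ T) {mu : ℝ}
    (hx0 : x ≠ 0) (hx : pathHam m q *ᵥ x = lam • x) (hy0 : y ≠ 0)
    (hy : pathHam m q *ᵥ y = mu • y) : T * (lam - mu) ∈ zmultiples Real.pi := by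
  rw [mul_sub]
  exact sub_mem_zmultiples_pi_of_cexp_sq_eq <|
    (pathHam_cexp_sq_eq_of_pst hm hq h hx0 hx).trans (pathHam_cexp_sq_eq_of_pst hm hq h hy0 hy).symm

end PathHamiltonian

theorem trace_revPerm_permMatrix (n : ℕ) :
    (Fin.revPerm.permMatrix ℝ : Matrix (Fin (2 * n)) (Fin (2 * n)) ℝ).trace = 0 := by
  rw [trace_permutation, Nat.cast_eq_zero, Set.ncard_eq_zero]
  ext i
  simp only [Function.mem_fixedPoints, Function.IsFixedPt, Fin.revPerm_apply, Fin.ext_iff,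
    Fin.val_rev, Set.mem_empty_iff_false, iff_false]
  omega

theorem trace_pathHam_mul_revPerm_permMatrix {n : ℕ} (hn : 0 < n) (q : Fin (2 * n) → ℝ) :
    (pathHam (2 * n) q * Fin.revPerm.permMatrix ℝ).trace = 2 := by
  have hentry (i : Fin (2 * n)) :
      pathHam (2 * n) q i i.rev = if (i : ℕ) + 1 = n ∨ (i : ℕ) = n then 1 else 0 := by
    have := i.isLt
    simp only [pathHam, pathAdj, Matrix.add_apply, of_apply, diagonal_apply, Fin.val_rev,
      Fin.ext_iff]
    rw [if_neg (show ¬(i : ℕ) = 2 * n - (i + 1) by omega), add_zero]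
    congr 1
    apply propext
    omega
  rw [Equiv.Perm.permMatrix, PEquiv.mul_toMatrix_toPEquiv, trace,
    Fintype.sum_eq_add ⟨n - 1, by omega⟩ ⟨n, by omega⟩ (by simp [Fin.ext_iff]; omega)]
  · simp only [diag_apply, submatrix_apply, id, Fin.revPerm_symm, Fin.revPerm_apply, hentry]
    rw [if_pos (Or.inl (by omega))]
    norm_num
  · intro i hi
    simp only [diag_apply, submatrix_apply, id, Fin.revPerm_symm, Fin.revPerm_apply, hentry]
    rw [if_neg]
    simp only [ne_eq, Fin.ext_iff] at hi
    omega

theorem exists_signs_pathHam_eigenvalues {n : ℕ} (hn : 0 < n) {q : Fin (2 * n) → ℝ}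
    (hq : ∀ i, q i.rev = q i) :
    ∃ ε : Fin (2 * n) → ℝ, (∀ i, ε i = 1 ∨ ε i = -1) ∧ ∑ i, ε i = 0 ∧
      ∑ i, ε i * (pathHam_isHermitian (2 * n) q).eigenvalues i = 2 := by
  set hH := pathHam_isHermitian (2 * n) q
  choose ε hε hrev using fun i =>
    pathHam_eigenvector_comp_rev (by omega) hq (hH.eigenvectorBasis_ne_zero i)
      (hH.mulVec_eigenvectorBasis i)
  have hJ (i : Fin (2 * n)) : Fin.revPerm.permMatrix ℝ *ᵥ ⇑(hH.eigenvectorBasis i) =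
      ε i • ⇑(hH.eigenvectorBasis i) := by
    rw [permMatrix_mulVec]
    exact hrev i
  refine ⟨ε, hε, ?_, ?_⟩
  · rw [← trace_revPerm_permMatrix n, hH.trace_eq_sum_of_mulVec_eigenvectorBasis hJ]
  · rw [← trace_pathHam_mul_revPerm_permMatrix hn q,
      hH.trace_eq_sum_of_mulVec_eigenvectorBasis fun i => by
        rw [← mulVec_mulVec, hJ, mulVec_smul, hH.mulVec_eigenvectorBasis, smul_smul]]

theorem two_mul_mem_zmultiples_pi_of_pst {n : ℕ} (hn : 0 < n) {q : Fin (2 * n) → ℝ}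
    (hq : ∀ i, q i.rev = q i) {T : ℝ}
    (h : pst (pathHam (2 * n) q) ⟨0, by omega⟩ ⟨2 * n - 1, by omega⟩ T) :
    2 * T ∈ zmultiples Real.pi := by
  obtain ⟨ε, hε, hsum0, hsum2⟩ := exists_signs_pathHam_eigenvalues hn hq
  set hH := pathHam_isHermitian (2 * n) q
  set μ₀ := hH.eigenvalues ⟨0, by omega⟩
  have h2T : 2 * T = ∑ i, ε i * (T * (hH.eigenvalues i - μ₀)) := by
    have : ∑ i, ε i * (T * (hH.eigenvalues i - μ₀)) =
        T * ∑ i, ε i * hH.eigenvalues i - T * μ₀ * ∑ i, ε i := by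
      rw [Finset.mul_sum, Finset.mul_sum, ← Finset.sum_sub_distrib]
      exact Finset.sum_congr rfl fun i _ => by ring
    rw [this, hsum0, hsum2]
    ring
  rw [h2T]
  refine AddSubgroup.sum_mem _ fun i _ => ?_
  have hi := pathHam_mul_sub_mem_zmultiples_pi_of_pst (by omega) hq h
    (hH.eigenvectorBasis_ne_zero i) (hH.mulVec_eigenvectorBasis i)
    (hH.eigenvectorBasis_ne_zero _) (hH.mulVec_eigenvectorBasis ⟨0, by omega⟩)
  rcases hε i with h | h
  · rwa [h, one_mul]
  · rw [h, neg_one_mul]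
    exact neg_mem hi

/-- if perfect state transfer occurs between the endpoints of an even path with
symmetric potential, then the difference of any two eigenvalues of the Hamiltonian is
rational. -/
theorem eigenvalue_differences_rational (n : ℕ) (hn : 2 ≤ n)
    (q : Fin (2 * n) → ℝ)
    (hsym : ∀ i j : Fin (2 * n), (i : ℕ) + (j : ℕ) = 2 * n - 1 → q i = q j)
    (T : ℝ)
    (hpst : pst (pathHam (2 * n) q) ⟨0, by omega⟩ ⟨2 * n - 1, by omega⟩ T)
    (lam mu : ℝ)
    (hlam : ∃ x : Fin (2 * n) → ℝ, x ≠ 0 ∧ (pathHam (2 * n) q).mulVec x = lam • x)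
    (hmu : ∃ y : Fin (2 * n) → ℝ, y ≠ 0 ∧ (pathHam (2 * n) q).mulVec y = mu • y) :
    ∃ r : ℚ, lam - mu = (r : ℝ) := by
  obtain ⟨x, hx0, hx⟩ := hlam
  obtain ⟨y, hy0, hy⟩ := hmu
  have hq : ∀ i, q i.rev = q i := fun i => hsym _ _ (by simp only [Fin.val_rev]; omega)
  exact exists_rat_eq_of_mul_mem_zmultiples_pi (hpst.time_ne_zero (by simp; omega))
    (two_mul_mem_zmultiples_pi_of_pst (by omega) hq hpst)
    (pathHam_mul_sub_mem_zmultiples_pi_of_pst _ hq hpst hx0 hx hy0 hy)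
end
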